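/- Suppose the aggregation map φ satisfies: φ(s1) = φ(s2) implies |Q*(s1, a) − Q*(s2, a)| ≤ ε for all a ∈ A1×A2, for some ε ≥ 0. Then for every s ∈ S, V^{π1†, π_GA,2*}(s) − V^{π_GA*}(s) ≤ 6ε/(1−γ)³. -/

import Mathlib

open Finset

/-- A mixed Markov policy: a probability distribution over actions at each state. -/
def IsPolicy {S A : Type*} [Fintype A] (π : S → A → ℝ) : Prop :=
  (∀ s a, 0 ≤ π s a) ∧ ∀ s, ∑ a, π s a = 1

/-- A transition kernel: a probability distribution over next states for every
state and joint action. -/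
def IsKernel {S A1 A2 : Type*} [Fintype S] (P : S → A1 → A2 → S → ℝ) : Prop :=
  (∀ s a1 a2 s', 0 ≤ P s a1 a2 s') ∧ ∀ s a1 a2, ∑ s', P s a1 a2 s' = 1

/-- Rewards lie in `[0,1]`. -/
def IsReward {S A1 A2 : Type*} (R : S → A1 → A2 → ℝ) : Prop :=
  ∀ s a1 a2, 0 ≤ R s a1 a2 ∧ R s a1 a2 ≤ 1

/-- The state-action value induced by a state value function `V`:
`Q(s,a) = R(s,a) + γ * Σ_{s'} P(s'|s,a) V(s')`. -/
def Qf {S A1 A2 : Type*} [Fintype S] (R : S → A1 → A2 → ℝ) (P : S → A1 → A2 → S → ℝ)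
    (γ : ℝ) (V : S → ℝ) (s : S) (a1 : A1) (a2 : A2) : ℝ :=
  R s a1 a2 + γ * ∑ s', P s a1 a2 s' * V s'

/-- `V` satisfies the Bellman equation for the policy profile `(π1, π2)`. -/
def IsValue {S A1 A2 : Type*} [Fintype S] [Fintype A1] [Fintype A2]
    (R : S → A1 → A2 → ℝ) (P : S → A1 → A2 → S → ℝ) (γ : ℝ)
    (π1 : S → A1 → ℝ) (π2 : S → A2 → ℝ) (V : S → ℝ) : Prop :=
  ∀ s, V s = ∑ a1, ∑ a2, π1 s a1 * π2 s a2 * Qf R P γ V s a1 a2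

/-- `Val` assigns to every policy profile its value function. -/
def IsValueOperator {S A1 A2 : Type*} [Fintype S] [Fintype A1] [Fintype A2]
    (R : S → A1 → A2 → ℝ) (P : S → A1 → A2 → S → ℝ) (γ : ℝ)
    (Val : (S → A1 → ℝ) → (S → A2 → ℝ) → S → ℝ) : Prop :=
  ∀ π1 π2, IsPolicy π1 → IsPolicy π2 → IsValue R P γ π1 π2 (Val π1 π2)

/-- `(π1, π2)` is a Nash equilibrium of the game whose values are given by `Val`:
for all states `s` and all policies `π1'`, `π2'`,
`Val π1 π2' s ≥ Val π1 π2 s ≥ Val π1' π2 s`. -/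
def IsNash {S A1 A2 : Type*} [Fintype A1] [Fintype A2]
    (Val : (S → A1 → ℝ) → (S → A2 → ℝ) → S → ℝ)
    (π1 : S → A1 → ℝ) (π2 : S → A2 → ℝ) : Prop :=
  IsPolicy π1 ∧ IsPolicy π2 ∧
    ∀ s, ∀ π1' π2', IsPolicy π1' → IsPolicy π2' →
      Val π1 π2' s ≥ Val π1 π2 s ∧ Val π1 π2 s ≥ Val π1' π2 s

/-- `π1d` is a best response for player 1 against the player-2 policy `π2`:
`Val π1d π2 s = max_{π1} Val π1 π2 s` for every state `s`. -/
def IsBestResponse1 {S A1 A2 : Type*} [Fintype A1]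
    (Val : (S → A1 → ℝ) → (S → A2 → ℝ) → S → ℝ)
    (π1d : S → A1 → ℝ) (π2 : S → A2 → ℝ) : Prop :=
  IsPolicy π1d ∧ ∀ π1, IsPolicy π1 → ∀ s, Val π1 π2 s ≤ Val π1d π2 s

/-- A weight function for the aggregation map `φ`: weights lie in `[0,1]` and sum
to one within each aggregated class. -/
def IsAggWeight {S SA : Type*} [Fintype S] [DecidableEq SA] (φ : S → SA) (w : S → ℝ) : Prop :=
  (∀ s, 0 ≤ w s ∧ w s ≤ 1) ∧ ∀ sA : SA, ∑ s ∈ univ.filter (fun s => φ s = sA), w s = 1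

/-- The abstract transition kernel:
`P_A(s_A'|s_A,a) = Σ_{s : φ s = s_A} Σ_{s' : φ s' = s_A'} P(s'|s,a) w(s)`. -/
def PA {S SA A1 A2 : Type*} [Fintype S] [DecidableEq SA]
    (P : S → A1 → A2 → S → ℝ) (φ : S → SA) (w : S → ℝ)
    (sA : SA) (a1 : A1) (a2 : A2) (sA' : SA) : ℝ :=
  ∑ s ∈ univ.filter (fun s => φ s = sA),
    ∑ s' ∈ univ.filter (fun s' => φ s' = sA'), P s a1 a2 s' * w s

/-- The abstract reward function:
`R_A(s_A,a) = Σ_{s : φ s = s_A} R(s,a) w(s)`. -/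
def RA {S SA A1 A2 : Type*} [Fintype S] [DecidableEq SA]
    (R : S → A1 → A2 → ℝ) (φ : S → SA) (w : S → ℝ)
    (sA : SA) (a1 : A1) (a2 : A2) : ℝ :=
  ∑ s ∈ univ.filter (fun s => φ s = sA), R s a1 a2 * w s

/-!
Write `V*`, `Q*` for the ground equilibrium values and `V_A`, `Q_A` for the abstract ones.
`Q_A` at a class is a `w`-average over the class of ground Q-values computed against the
lifted value `V_A ∘ φ`, so `‖Q_A ∘ φ - Q*‖ ≤ ε + γ‖V_A ∘ φ - V*‖`; since the value of a
matrix game is 1-Lipschitz in the payoffs, `‖V_A ∘ φ - V*‖ ≤ ‖Q_A ∘ φ - Q*‖`, and both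
errors are at most `η = ε / (1 - γ)`. The lifted profile is thus statewise a saddle point of
an `η`-perturbation of `Q*`, with value `η`-close to `V*`. One Bellman step of any deviation
of player 1 raises `V*` by at most `2η`, one of the lifted profile lowers it by at most
`2η`, and the comparison principle for `γ`-contractions turns each into `2η / (1 - γ)`.
-/

section WeightedAverage

variable {ι : Type*} {s : Finset ι} {p x : ι → ℝ} {c : ℝ}

theorem sum_mul_le_of_forall_le (hp0 : ∀ i ∈ s, 0 ≤ p i) (hp1 : ∑ i ∈ s, p i = 1)
    (h : ∀ i ∈ s, x i ≤ c) : ∑ i ∈ s, p i * x i ≤ c :=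
  calc ∑ i ∈ s, p i * x i ≤ ∑ i ∈ s, p i * c :=
        sum_le_sum fun i hi => mul_le_mul_of_nonneg_left (h i hi) (hp0 i hi)
    _ = c := by rw [← sum_mul, hp1, one_mul]

theorem le_sum_mul_of_forall_le (hp0 : ∀ i ∈ s, 0 ≤ p i) (hp1 : ∑ i ∈ s, p i = 1)
    (h : ∀ i ∈ s, c ≤ x i) : c ≤ ∑ i ∈ s, p i * x i :=
  calc c = ∑ i ∈ s, p i * c := by rw [← sum_mul, hp1, one_mul]
    _ ≤ ∑ i ∈ s, p i * x i :=
        sum_le_sum fun i hi => mul_le_mul_of_nonneg_left (h i hi) (hp0 i hi)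

theorem abs_sum_mul_sub_le {y : ℝ} (hp0 : ∀ i ∈ s, 0 ≤ p i) (hp1 : ∑ i ∈ s, p i = 1)
    (h : ∀ i ∈ s, |x i - y| ≤ c) : |∑ i ∈ s, p i * x i - y| ≤ c := by
  rw [abs_sub_le_iff]
  constructor
  · linarith [sum_mul_le_of_forall_le hp0 hp1 (x := x) (c := y + c) fun i hi =>
      by linarith [(abs_sub_le_iff.1 (h i hi)).1]]
  · linarith [le_sum_mul_of_forall_le hp0 hp1 (x := x) (c := y - c) fun i hi =>
      by linarith [(abs_sub_le_iff.1 (h i hi)).2]]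

end WeightedAverage

theorem le_div_one_sub_of_forall_le_add_mul {σ : Type*} [Finite σ] {X : σ → ℝ} {γ c : ℝ}
    (hγ1 : γ < 1) (h : ∀ m, (∀ s, X s ≤ m) → ∀ s, X s ≤ c + γ * m) (s : σ) :
    X s ≤ c / (1 - γ) := by
  have : Nonempty σ := ⟨s⟩
  obtain ⟨t, ht⟩ := Finite.exists_max X
  have hmax : X t ≤ c + γ * X t := h (X t) ht t
  calc X s ≤ X t := ht s
    _ ≤ c / (1 - γ) := by rw [le_div_iff₀ (by linarith)]; linarith

section MatrixGame

variable {A1 A2 : Type*} [Fintype A1] [Fintype A2]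

def payoff (f : A1 → A2 → ℝ) (p : A1 → ℝ) (q : A2 → ℝ) : ℝ :=
  ∑ a1, ∑ a2, p a1 * q a2 * f a1 a2

def IsSaddle (f : A1 → A2 → ℝ) (p : A1 → ℝ) (q : A2 → ℝ) (v : ℝ) : Prop :=
  (∀ a1, ∑ a2, q a2 * f a1 a2 ≤ v) ∧ ∀ a2, v ≤ ∑ a1, p a1 * f a1 a2

variable {f g : A1 → A2 → ℝ} {p p' : A1 → ℝ} {q q' : A2 → ℝ} {v v' c : ℝ}

theorem payoff_eq_sum_rows (f : A1 → A2 → ℝ) (p : A1 → ℝ) (q : A2 → ℝ) :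
    payoff f p q = ∑ a1, p a1 * ∑ a2, q a2 * f a1 a2 := by
  simp only [payoff, mul_sum, mul_assoc]

theorem payoff_eq_sum_cols (f : A1 → A2 → ℝ) (p : A1 → ℝ) (q : A2 → ℝ) :
    payoff f p q = ∑ a2, q a2 * ∑ a1, p a1 * f a1 a2 := by
  rw [payoff, sum_comm]
  simp only [mul_sum]
  exact sum_congr rfl fun _ _ => sum_congr rfl fun _ _ => by ring

theorem payoff_single_left [DecidableEq A1] (f : A1 → A2 → ℝ) (b : A1) (q : A2 → ℝ) :
    payoff f (Pi.single b 1) q = ∑ a2, q a2 * f b a2 := by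
  simp [payoff_eq_sum_rows, Pi.single_apply]

theorem payoff_single_right [DecidableEq A2] (f : A1 → A2 → ℝ) (p : A1 → ℝ) (b : A2) :
    payoff f p (Pi.single b 1) = ∑ a1, p a1 * f a1 b := by
  simp [payoff_eq_sum_cols, Pi.single_apply]

theorem payoff_le_payoff_add (hp : p ∈ stdSimplex ℝ A1) (hq : q ∈ stdSimplex ℝ A2)
    (h : ∀ a1 a2, f a1 a2 ≤ g a1 a2 + c) : payoff f p q ≤ payoff g p q + c :=
  calc payoff f p q ≤ ∑ a1, ∑ a2, p a1 * q a2 * (g a1 a2 + c) :=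
        sum_le_sum fun a1 _ => sum_le_sum fun a2 _ =>
          mul_le_mul_of_nonneg_left (h a1 a2) (mul_nonneg (hp.1 a1) (hq.1 a2))
    _ = payoff g p q + c := by
        simp only [payoff, mul_add, sum_add_distrib, ← sum_mul, ← sum_mul_sum, hp.2, hq.2,
          one_mul]

theorem IsSaddle.payoff_le (h : IsSaddle f p q v) (hp' : p' ∈ stdSimplex ℝ A1) :
    payoff f p' q ≤ v := by
  rw [payoff_eq_sum_rows]
  exact sum_mul_le_of_forall_le (fun a _ => hp'.1 a) hp'.2 fun a1 _ => h.1 a1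

theorem IsSaddle.le_payoff (h : IsSaddle f p q v) (hq' : q' ∈ stdSimplex ℝ A2) :
    v ≤ payoff f p q' := by
  rw [payoff_eq_sum_cols]
  exact le_sum_mul_of_forall_le (fun a _ => hq'.1 a) hq'.2 fun a2 _ => h.2 a2

theorem IsSaddle.le_add_of_le_add (hf : IsSaddle f p q v) (hg : IsSaddle g p' q' v')
    (hp : p ∈ stdSimplex ℝ A1) (hq' : q' ∈ stdSimplex ℝ A2)
    (h : ∀ a1 a2, f a1 a2 ≤ g a1 a2 + c) : v ≤ v' + c :=
  calc v ≤ payoff f p q' := hf.le_payoff hq'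
    _ ≤ payoff g p q' + c := payoff_le_payoff_add hp hq' h
    _ ≤ v' + c := by linarith [hg.payoff_le hp]

theorem IsSaddle.abs_sub_le (hf : IsSaddle f p q v) (hg : IsSaddle g p' q' v')
    (hp : p ∈ stdSimplex ℝ A1) (hq : q ∈ stdSimplex ℝ A2) (hp' : p' ∈ stdSimplex ℝ A1)
    (hq' : q' ∈ stdSimplex ℝ A2) (h : ∀ a1 a2, |f a1 a2 - g a1 a2| ≤ c) : |v - v'| ≤ c := by
  have hfg := hf.le_add_of_le_add hg hp hq' fun a1 a2 => by
    linarith [(abs_sub_le_iff.1 (h a1 a2)).1]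
  have hgf := hg.le_add_of_le_add hf hp' hq fun a1 a2 => by
    linarith [(abs_sub_le_iff.1 (h a1 a2)).2]
  exact abs_sub_le_iff.2 ⟨by linarith, by linarith⟩

end MatrixGame

section Policy

variable {S S' A : Type*} [Fintype A] {π : S → A → ℝ}

theorem IsPolicy.mem_stdSimplex (h : IsPolicy π) (s : S) : π s ∈ stdSimplex ℝ A :=
  ⟨h.1 s, h.2 s⟩

theorem IsPolicy.comp (h : IsPolicy π) (f : S' → S) : IsPolicy fun s => π (f s) :=
  ⟨fun s => h.1 (f s), fun s => h.2 (f s)⟩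

theorem IsPolicy.update_single [DecidableEq S] [DecidableEq A] (h : IsPolicy π) (s : S)
    (b : A) : IsPolicy (Function.update π s (Pi.single b 1)) := by
  have hmem : ∀ t, Function.update π s (Pi.single b 1) t ∈ stdSimplex ℝ A := by
    rw [Function.forall_update_iff _ fun _ p => p ∈ stdSimplex ℝ A]
    exact ⟨single_mem_stdSimplex ℝ b, fun t _ => h.mem_stdSimplex t⟩
  exact ⟨fun t => (hmem t).1, fun t => (hmem t).2⟩

end Policy

section PolicyEvaluation

variable {σ A1 A2 : Type*} [Fintype σ]
  {R : σ → A1 → A2 → ℝ} {P : σ → A1 → A2 → σ → ℝ} {γ : ℝ}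

theorem Qf_le_Qf_add (hP : IsKernel P) (hγ0 : 0 ≤ γ) {V W : σ → ℝ} {m : ℝ}
    (h : ∀ s, V s ≤ W s + m) (s : σ) (a1 : A1) (a2 : A2) :
    Qf R P γ V s a1 a2 ≤ Qf R P γ W s a1 a2 + γ * m := by
  have hrow : ∑ s', P s a1 a2 s' * V s' - ∑ s', P s a1 a2 s' * W s' ≤ m := by
    simp only [← sum_sub_distrib, ← mul_sub]
    exact sum_mul_le_of_forall_le (fun s' _ => hP.1 s a1 a2 s') (hP.2 s a1 a2)
      fun s' _ => by linarith [h s']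
  unfold Qf
  linarith [mul_le_mul_of_nonneg_left hrow hγ0]

theorem abs_Qf_sub_le (hP : IsKernel P) (hγ0 : 0 ≤ γ) {V W : σ → ℝ} {d : ℝ}
    (h : ∀ s, |V s - W s| ≤ d) (s : σ) (a1 : A1) (a2 : A2) :
    |Qf R P γ V s a1 a2 - Qf R P γ W s a1 a2| ≤ γ * d := by
  have hVW := Qf_le_Qf_add (R := R) hP hγ0 (V := V) (W := W) (m := d)
    (fun t => by linarith [abs_sub_le_iff.1 (h t)]) s a1 a2
  have hWV := Qf_le_Qf_add (R := R) hP hγ0 (V := W) (W := V) (m := d)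
    (fun t => by linarith [abs_sub_le_iff.1 (h t)]) s a1 a2
  exact abs_sub_le_iff.2 ⟨by linarith, by linarith⟩

variable [Fintype A1] [Fintype A2]

theorem payoff_Qf_le_add (hP : IsKernel P) (hγ0 : 0 ≤ γ) {p : A1 → ℝ} {q : A2 → ℝ}
    (hp : p ∈ stdSimplex ℝ A1) (hq : q ∈ stdSimplex ℝ A2) {V W : σ → ℝ} {m : ℝ}
    (h : ∀ s, V s ≤ W s + m) (s : σ) :
    payoff (Qf R P γ V s) p q ≤ payoff (Qf R P γ W s) p q + γ * m :=
  payoff_le_payoff_add hp hq fun a1 a2 => Qf_le_Qf_add hP hγ0 h s a1 a2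

variable {π1 : σ → A1 → ℝ} {π2 : σ → A2 → ℝ} {V U : σ → ℝ} {c : ℝ}

theorem IsValue.le_add_div_of_supersolution (hV : IsValue R P γ π1 π2 V) (hP : IsKernel P)
    (hγ0 : 0 ≤ γ) (hγ1 : γ < 1) (hπ1 : IsPolicy π1) (hπ2 : IsPolicy π2)
    (hU : ∀ s, payoff (Qf R P γ U s) (π1 s) (π2 s) ≤ U s + c) (s : σ) :
    V s ≤ U s + c / (1 - γ) := by
  suffices V s - U s ≤ c / (1 - γ) by linarith
  refine le_div_one_sub_of_forall_le_add_mul (X := fun t => V t - U t) hγ1 (fun m hm t => ?_) s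
  have hVt : V t = payoff (Qf R P γ V t) (π1 t) (π2 t) := hV t
  have hstep : payoff (Qf R P γ V t) (π1 t) (π2 t) ≤ payoff (Qf R P γ U t) (π1 t) (π2 t) + γ * m :=
    payoff_Qf_le_add hP hγ0 (hπ1.mem_stdSimplex t) (hπ2.mem_stdSimplex t)
      (fun t' => by linarith [hm t']) t
  linarith [hU t]

theorem IsValue.subsolution_le_add_div (hV : IsValue R P γ π1 π2 V) (hP : IsKernel P)
    (hγ0 : 0 ≤ γ) (hγ1 : γ < 1) (hπ1 : IsPolicy π1) (hπ2 : IsPolicy π2)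
    (hU : ∀ s, U s ≤ payoff (Qf R P γ U s) (π1 s) (π2 s) + c) (s : σ) :
    U s ≤ V s + c / (1 - γ) := by
  suffices U s - V s ≤ c / (1 - γ) by linarith
  refine le_div_one_sub_of_forall_le_add_mul (X := fun t => U t - V t) hγ1 (fun m hm t => ?_) s
  have hVt : V t = payoff (Qf R P γ V t) (π1 t) (π2 t) := hV t
  have hstep : payoff (Qf R P γ U t) (π1 t) (π2 t) ≤ payoff (Qf R P γ V t) (π1 t) (π2 t) + γ * m :=
    payoff_Qf_le_add hP hγ0 (hπ1.mem_stdSimplex t) (hπ2.mem_stdSimplex t)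
      (fun t' => by linarith [hm t']) t
  linarith [hU t]

end PolicyEvaluation

section Nash

variable {σ A1 A2 : Type*} [Fintype σ] [Fintype A1] [Fintype A2]
  {R : σ → A1 → A2 → ℝ} {P : σ → A1 → A2 → σ → ℝ} {γ : ℝ}
  {Val : (σ → A1 → ℝ) → (σ → A2 → ℝ) → σ → ℝ} {π1 : σ → A1 → ℝ} {π2 : σ → A2 → ℝ}

/-- Were the pure deviation `b` at `s` profitable, the equilibrium value would be a
subsolution of the Bellman equation of the policy that plays `b` at `s` only, and that policy
would beat the equilibrium at `s`. -/
theorem IsNash.sum_mul_Qf_le (hN : IsNash Val π1 π2) (hVal : IsValueOperator R P γ Val)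
    (hP : IsKernel P) (hγ0 : 0 ≤ γ) (hγ1 : γ < 1) (s : σ) (b : A1) :
    ∑ a2, π2 s a2 * Qf R P γ (Val π1 π2) s b a2 ≤ Val π1 π2 s := by
  classical
  obtain ⟨hπ1, hπ2, hopt⟩ := hN
  set V := Val π1 π2
  set π1' := Function.update π1 s (Pi.single b 1)
  have hπ1' : IsPolicy π1' := hπ1.update_single s b
  have hrow (U : σ → ℝ) :
      payoff (Qf R P γ U s) (π1' s) (π2 s) = ∑ a2, π2 s a2 * Qf R P γ U s b a2 := by
    simp only [π1', Function.update_self, payoff_single_left]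
  by_contra! hgt
  have hsub (t : σ) : V t ≤ payoff (Qf R P γ V t) (π1' t) (π2 t) + 0 := by
    rcases eq_or_ne t s with rfl | hts
    · rw [hrow]; linarith
    · simp only [π1', Function.update_of_ne hts, add_zero]
      exact (hVal π1 π2 hπ1 hπ2 t).le
  have hVV' (t : σ) : V t ≤ Val π1' π2 t + 0 := by
    simpa using (hVal π1' π2 hπ1' hπ2).subsolution_le_add_div hP hγ0 hγ1 hπ1' hπ2 hsub t
  refine lt_irrefl (V s) ?_
  calc V s < ∑ a2, π2 s a2 * Qf R P γ V s b a2 := hgt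
    _ = payoff (Qf R P γ V s) (π1' s) (π2 s) := (hrow V).symm
    _ ≤ payoff (Qf R P γ (Val π1' π2) s) (π1' s) (π2 s) + γ * 0 :=
        payoff_Qf_le_add hP hγ0 (hπ1'.mem_stdSimplex s) (hπ2.mem_stdSimplex s) hVV' s
    _ = Val π1' π2 s := by rw [mul_zero, add_zero]; exact (hVal π1' π2 hπ1' hπ2 s).symm
    _ ≤ V s := (hopt s π1' π2 hπ1' hπ2).2

theorem IsNash.le_sum_mul_Qf (hN : IsNash Val π1 π2) (hVal : IsValueOperator R P γ Val)
    (hP : IsKernel P) (hγ0 : 0 ≤ γ) (hγ1 : γ < 1) (s : σ) (b : A2) :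
    Val π1 π2 s ≤ ∑ a1, π1 s a1 * Qf R P γ (Val π1 π2) s a1 b := by
  classical
  obtain ⟨hπ1, hπ2, hopt⟩ := hN
  set V := Val π1 π2
  set π2' := Function.update π2 s (Pi.single b 1)
  have hπ2' : IsPolicy π2' := hπ2.update_single s b
  have hcol (U : σ → ℝ) :
      payoff (Qf R P γ U s) (π1 s) (π2' s) = ∑ a1, π1 s a1 * Qf R P γ U s a1 b := by
    simp only [π2', Function.update_self, payoff_single_right]
  by_contra! hlt
  have hsuper (t : σ) : payoff (Qf R P γ V t) (π1 t) (π2' t) ≤ V t + 0 := by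
    rcases eq_or_ne t s with rfl | hts
    · rw [hcol]; linarith
    · simp only [π2', Function.update_of_ne hts, add_zero]
      exact (hVal π1 π2 hπ1 hπ2 t).ge
  have hV'V (t : σ) : Val π1 π2' t ≤ V t + 0 := by
    simpa using (hVal π1 π2' hπ1 hπ2').le_add_div_of_supersolution hP hγ0 hγ1 hπ1 hπ2' hsuper t
  refine lt_irrefl (V s) ?_
  calc V s ≤ Val π1 π2' s := (hopt s π1 π2' hπ1 hπ2').1
    _ = payoff (Qf R P γ (Val π1 π2') s) (π1 s) (π2' s) := hVal π1 π2' hπ1 hπ2' s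
    _ ≤ payoff (Qf R P γ V s) (π1 s) (π2' s) + γ * 0 :=
        payoff_Qf_le_add hP hγ0 (hπ1.mem_stdSimplex s) (hπ2'.mem_stdSimplex s) hV'V s
    _ = ∑ a1, π1 s a1 * Qf R P γ V s a1 b := by rw [mul_zero, add_zero, hcol]
    _ < V s := hlt

theorem IsNash.isSaddle (hN : IsNash Val π1 π2) (hVal : IsValueOperator R P γ Val)
    (hP : IsKernel P) (hγ0 : 0 ≤ γ) (hγ1 : γ < 1) (s : σ) :
    IsSaddle (Qf R P γ (Val π1 π2) s) (π1 s) (π2 s) (Val π1 π2 s) :=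
  ⟨hN.sum_mul_Qf_le hVal hP hγ0 hγ1 s, hN.le_sum_mul_Qf hVal hP hγ0 hγ1 s⟩

end Nash

section Exploitability

variable {σ A1 A2 : Type*} [Fintype σ] [Fintype A1] [Fintype A2]
  {R : σ → A1 → A2 → ℝ} {P : σ → A1 → A2 → σ → ℝ} {γ : ℝ}
  {Val : (σ → A1 → ℝ) → (σ → A2 → ℝ) → σ → ℝ}

theorem exploitability_le_of_isSaddle_approx (hVal : IsValueOperator R P γ Val)
    (hP : IsKernel P) (hγ0 : 0 ≤ γ) (hγ1 : γ < 1) {π1 π1' : σ → A1 → ℝ} {π2 : σ → A2 → ℝ}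
    (hπ1 : IsPolicy π1) (hπ1' : IsPolicy π1') (hπ2 : IsPolicy π2) {g : σ → A1 → A2 → ℝ}
    {v V : σ → ℝ} {η : ℝ} (hsad : ∀ t, IsSaddle (g t) (π1 t) (π2 t) (v t))
    (hg : ∀ t a1 a2, |g t a1 a2 - Qf R P γ V t a1 a2| ≤ η) (hv : ∀ t, |v t - V t| ≤ η)
    (s : σ) : Val π1' π2 s - Val π1 π2 s ≤ 4 * η / (1 - γ) := by
  have hsuper (t : σ) : payoff (Qf R P γ V t) (π1' t) (π2 t) ≤ V t + 2 * η :=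
    calc payoff (Qf R P γ V t) (π1' t) (π2 t) ≤ payoff (g t) (π1' t) (π2 t) + η :=
          payoff_le_payoff_add (hπ1'.mem_stdSimplex t) (hπ2.mem_stdSimplex t)
            fun a1 a2 => by linarith [(abs_sub_le_iff.1 (hg t a1 a2)).2]
      _ ≤ v t + η := by linarith [(hsad t).payoff_le (hπ1'.mem_stdSimplex t)]
      _ ≤ V t + 2 * η := by linarith [(abs_sub_le_iff.1 (hv t)).1]
  have hsub (t : σ) : V t ≤ payoff (Qf R P γ V t) (π1 t) (π2 t) + 2 * η :=
    calc V t ≤ v t + η := by linarith [(abs_sub_le_iff.1 (hv t)).2]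
      _ ≤ payoff (g t) (π1 t) (π2 t) + η := by
          linarith [(hsad t).le_payoff (hπ2.mem_stdSimplex t)]
      _ ≤ payoff (Qf R P γ V t) (π1 t) (π2 t) + 2 * η := by
          linarith [payoff_le_payoff_add (hπ1.mem_stdSimplex t) (hπ2.mem_stdSimplex t)
            (f := g t) (g := Qf R P γ V t) (c := η)
            fun a1 a2 => by linarith [(abs_sub_le_iff.1 (hg t a1 a2)).1]]
  have hdev := (hVal π1' π2 hπ1' hπ2).le_add_div_of_supersolution hP hγ0 hγ1 hπ1' hπ2 hsuper s
  have hprof := (hVal π1 π2 hπ1 hπ2).subsolution_le_add_div hP hγ0 hγ1 hπ1 hπ2 hsub s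
  calc Val π1' π2 s - Val π1 π2 s ≤ 2 * η / (1 - γ) + 2 * η / (1 - γ) := by linarith
    _ = 4 * η / (1 - γ) := by ring

end Exploitability

section Abstraction

variable {S SA A1 A2 : Type*} [Fintype S] [Fintype SA] [DecidableEq SA]
  {P : S → A1 → A2 → S → ℝ} {R : S → A1 → A2 → ℝ} {γ : ℝ} {φ : S → SA} {w : S → ℝ}

theorem isKernel_PA (hP : IsKernel P) (hw : IsAggWeight φ w) : IsKernel (PA P φ w) := by
  refine ⟨fun sA a1 a2 sA' => sum_nonneg fun s _ => sum_nonneg fun s' _ =>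
    mul_nonneg (hP.1 s a1 a2 s') (hw.1 s).1, fun sA a1 a2 => ?_⟩
  simp only [PA]
  rw [sum_comm]
  refine (sum_congr rfl fun s _ => ?_).trans (hw.2 sA)
  rw [sum_fiberwise univ φ fun s' => P s a1 a2 s' * w s, ← sum_mul, hP.2 s a1 a2, one_mul]

theorem Qf_RA_PA (VA : SA → ℝ) (sA : SA) (a1 : A1) (a2 : A2) :
    Qf (RA R φ w) (PA P φ w) γ VA sA a1 a2 =
      ∑ g ∈ univ.filter (fun g => φ g = sA), w g * Qf R P γ (fun t => VA (φ t)) g a1 a2 := by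
  have hlift (g : S) : ∑ sA', (∑ s' ∈ univ.filter (fun s' => φ s' = sA'), P g a1 a2 s') * VA sA'
      = ∑ s', P g a1 a2 s' * VA (φ s') := by
    rw [← sum_fiberwise univ φ fun s' => P g a1 a2 s' * VA (φ s')]
    refine sum_congr rfl fun sA' _ => ?_
    rw [sum_mul]
    exact sum_congr rfl fun s' hs' => by rw [(mem_filter.1 hs').2]
  have hPA : ∑ sA', PA P φ w sA a1 a2 sA' * VA sA'
      = ∑ g ∈ univ.filter (fun g => φ g = sA), w g * ∑ s', P g a1 a2 s' * VA (φ s') := by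
    simp only [PA, sum_mul]
    rw [sum_comm]
    refine sum_congr rfl fun g _ => ?_
    simp only [← hlift, mul_sum, sum_mul]
    exact sum_congr rfl fun sA' _ => sum_congr rfl fun s' _ => by ring
  rw [Qf, RA, hPA, mul_sum, ← sum_add_distrib]
  exact sum_congr rfl fun g _ => by rw [Qf]; ring

theorem abs_Qf_RA_PA_sub_le (hP : IsKernel P) (hγ0 : 0 ≤ γ) (hw : IsAggWeight φ w)
    {V : S → ℝ} {VA : SA → ℝ} {ε d : ℝ}
    (hagg : ∀ s1 s2 : S, φ s1 = φ s2 → ∀ (a1 : A1) (a2 : A2),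
      |Qf R P γ V s1 a1 a2 - Qf R P γ V s2 a1 a2| ≤ ε)
    (hd : ∀ s, |VA (φ s) - V s| ≤ d) (t : S) (a1 : A1) (a2 : A2) :
    |Qf (RA R φ w) (PA P φ w) γ VA (φ t) a1 a2 - Qf R P γ V t a1 a2| ≤ ε + γ * d := by
  rw [Qf_RA_PA]
  refine abs_sum_mul_sub_le (fun g _ => (hw.1 g).1) (hw.2 (φ t)) fun g hg => ?_
  calc |Qf R P γ (fun s => VA (φ s)) g a1 a2 - Qf R P γ V t a1 a2|
      ≤ |Qf R P γ (fun s => VA (φ s)) g a1 a2 - Qf R P γ V g a1 a2|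
        + |Qf R P γ V g a1 a2 - Qf R P γ V t a1 a2| := abs_sub_le _ _ _
    _ ≤ γ * d + ε :=
        add_le_add (abs_Qf_sub_le hP hγ0 hd g a1 a2) (hagg g t (mem_filter.1 hg).2 a1 a2)
    _ = ε + γ * d := add_comm _ _

theorem abs_value_abstraction_sub_le [Fintype A1] [Fintype A2] (hP : IsKernel P)
    (hγ0 : 0 ≤ γ) (hγ1 : γ < 1) (hw : IsAggWeight φ w)
    {Val : (S → A1 → ℝ) → (S → A2 → ℝ) → S → ℝ} (hVal : IsValueOperator R P γ Val)
    {ValA : (SA → A1 → ℝ) → (SA → A2 → ℝ) → SA → ℝ}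
    (hValA : IsValueOperator (RA R φ w) (PA P φ w) γ ValA)
    {π1 : S → A1 → ℝ} {π2 : S → A2 → ℝ} (hNash : IsNash Val π1 π2)
    {πA1 : SA → A1 → ℝ} {πA2 : SA → A2 → ℝ} (hNashA : IsNash ValA πA1 πA2) {ε : ℝ}
    (hagg : ∀ s1 s2 : S, φ s1 = φ s2 → ∀ (a1 : A1) (a2 : A2),
      |Qf R P γ (Val π1 π2) s1 a1 a2 - Qf R P γ (Val π1 π2) s2 a1 a2| ≤ ε) (s : S) :
    |ValA πA1 πA2 (φ s) - Val π1 π2 s| ≤ ε / (1 - γ) := by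
  refine le_div_one_sub_of_forall_le_add_mul
    (X := fun t => |ValA πA1 πA2 (φ t) - Val π1 π2 t|) hγ1 (fun m hm t => ?_) s
  exact (hNashA.isSaddle hValA (isKernel_PA hP hw) hγ0 hγ1 (φ t)).abs_sub_le
    (hNash.isSaddle hVal hP hγ0 hγ1 t) (hNashA.1.mem_stdSimplex _) (hNashA.2.1.mem_stdSimplex _)
    (hNash.1.mem_stdSimplex t) (hNash.2.1.mem_stdSimplex t)
    (abs_Qf_RA_PA_sub_le hP hγ0 hw hagg hm t)

end Abstraction

theorem exploitability_bound_minimax_value_abstraction_general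
    {S SA A1 A2 : Type*}
    [Fintype S] [Fintype SA] [DecidableEq SA]
    [Fintype A1] [Fintype A2]
    (P : S → A1 → A2 → S → ℝ) (R : S → A1 → A2 → ℝ) (γ : ℝ)
    (hP : IsKernel P) (hγ0 : 0 ≤ γ) (hγ1 : γ < 1)
    (Val : (S → A1 → ℝ) → (S → A2 → ℝ) → S → ℝ)
    (hVal : IsValueOperator R P γ Val)
    (φ : S → SA)
    (w : S → ℝ) (hw : IsAggWeight φ w)
    (ValA : (SA → A1 → ℝ) → (SA → A2 → ℝ) → SA → ℝ)
    (hValA : IsValueOperator (RA R φ w) (PA P φ w) γ ValA)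
    (πA1 : SA → A1 → ℝ) (πA2 : SA → A2 → ℝ)
    (hNashA : IsNash ValA πA1 πA2)
    (π1s : S → A1 → ℝ) (π2s : S → A2 → ℝ)
    (hNash : IsNash Val π1s π2s)
    (π1d : S → A1 → ℝ)
    (hBR : IsBestResponse1 Val π1d (fun s => πA2 (φ s)))
    (ε : ℝ) (hε : 0 ≤ ε)
    (hagg : ∀ s1 s2 : S, φ s1 = φ s2 → ∀ (a1 : A1) (a2 : A2),
      |Qf R P γ (Val π1s π2s) s1 a1 a2 - Qf R P γ (Val π1s π2s) s2 a1 a2| ≤ ε)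
    :
    ∀ s : S,
      Val π1d (fun s => πA2 (φ s)) s - Val (fun s => πA1 (φ s)) (fun s => πA2 (φ s)) s
        ≤ 6 * ε / (1 - γ) ^ 3 := by
  intro s
  have h1γ : 0 < 1 - γ := sub_pos.2 hγ1
  have hV := abs_value_abstraction_sub_le hP hγ0 hγ1 hw hVal hValA hNash hNashA hagg
  have hQ (t : S) (a1 : A1) (a2 : A2) :
      |Qf (RA R φ w) (PA P φ w) γ (ValA πA1 πA2) (φ t) a1 a2 - Qf R P γ (Val π1s π2s) t a1 a2|
        ≤ ε / (1 - γ) := by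
    have hfix : ε + γ * (ε / (1 - γ)) = ε / (1 - γ) := by field_simp; ring
    simpa only [hfix] using abs_Qf_RA_PA_sub_le hP hγ0 hw hagg hV t a1 a2
  calc _ ≤ 4 * (ε / (1 - γ)) / (1 - γ) :=
        exploitability_le_of_isSaddle_approx hVal hP hγ0 hγ1 (hNashA.1.comp φ) hBR.1
          (hNashA.2.1.comp φ) (fun t => hNashA.isSaddle hValA (isKernel_PA hP hw) hγ0 hγ1 (φ t))
          hQ hV s
    _ = 4 * ε * (1 - γ) / (1 - γ) ^ 3 := by field_simp
    _ ≤ 6 * ε / (1 - γ) ^ 3 :=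
        div_le_div_of_nonneg_right (by nlinarith [mul_nonneg hε hγ0]) (by positivity)

theorem exploitability_bound_minimax_value_abstraction
    {S SA A1 A2 : Type*}
    [Fintype S] [Nonempty S] [Fintype SA] [DecidableEq SA]
    [Fintype A1] [Nonempty A1] [Fintype A2] [Nonempty A2]
    (P : S → A1 → A2 → S → ℝ) (R : S → A1 → A2 → ℝ) (γ : ℝ)
    (hP : IsKernel P) (hR : IsReward R) (hγ0 : 0 ≤ γ) (hγ1 : γ < 1)
    (Val : (S → A1 → ℝ) → (S → A2 → ℝ) → S → ℝ)
    (hVal : IsValueOperator R P γ Val)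
    (φ : S → SA) (hφ : Function.Surjective φ)
    (w : S → ℝ) (hw : IsAggWeight φ w)
    (ValA : (SA → A1 → ℝ) → (SA → A2 → ℝ) → SA → ℝ)
    (hValA : IsValueOperator (RA R φ w) (PA P φ w) γ ValA)
    (πA1 : SA → A1 → ℝ) (πA2 : SA → A2 → ℝ)
    (hNashA : IsNash ValA πA1 πA2)
    (π1s : S → A1 → ℝ) (π2s : S → A2 → ℝ)
    (hNash : IsNash Val π1s π2s)
    (π1d : S → A1 → ℝ)
    (hBR : IsBestResponse1 Val π1d (fun s => πA2 (φ s)))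
    (ε : ℝ) (hε : 0 ≤ ε)
    (hagg : ∀ s1 s2 : S, φ s1 = φ s2 → ∀ (a1 : A1) (a2 : A2),
      |Qf R P γ (Val π1s π2s) s1 a1 a2 - Qf R P γ (Val π1s π2s) s2 a1 a2| ≤ ε)
    :
    ∀ s : S,
      Val π1d (fun s => πA2 (φ s)) s - Val (fun s => πA1 (φ s)) (fun s => πA2 (φ s)) s
        ≤ 6 * ε / (1 - γ) ^ 3 :=
  exploitability_bound_minimax_value_abstraction_general P R γ hP hγ0 hγ1 Val hVal φ w hw ValA hValA
    πA1 πA2 hNashA π1s π2s hNash π1d hBR ε hε hagg
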